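/- Let (k_n)_{n≥1} be a sequence of positive reals with k_n/n → k for some k ≥ 0, and for each n let Z_n ∼ Gamma(k_n, 1). Define I : ℝ → [0,∞] by I(x) = x − k + k·log(k/x) for x > 0 (with k·log(k/x) = 0 when k = 0), I(0) = 0 if k = 0, I(0) = ∞ if k > 0, and I(x) = ∞ for x < 0. Then for every closed set F ⊆ ℝ, limsup_{n→∞} (1/n)·log P(Z_n/n ∈ F) ≤ −inf_{x∈F} I(x). -/

import Mathlib

open MeasureTheory ProbabilityTheory Filter
open scoped ENNReal NNReal Classical

/-- The rate function of the Gamma LDP: `I(x) = x − k + k·log(k/x)` for `x > 0`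
(with `k·log(k/x) = 0` when `k = 0`), `I(0) = 0` if `k = 0`, `I(0) = ∞` if
`k > 0`, and `I(x) = ∞` for `x < 0`. -/
noncomputable def gammaRate (k x : ℝ) : ℝ≥0∞ :=
  if x < 0 then ⊤
  else if x = 0 then (if k = 0 then 0 else ⊤)
  else ENNReal.ofReal (x - k + k * Real.log (k / x))

section helpers
open Set


lemma gammaRate_of_pos {k x : ℝ} (hx : 0 < x) :
    gammaRate k x = ENNReal.ofReal (x - k + k * Real.log (k / x)) := by
  simp [gammaRate, not_lt.mpr hx.le, hx.ne']

lemma gammaRate_self {k : ℝ} (hk : 0 ≤ k) : gammaRate k k = 0 := by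
  rcases hk.eq_or_lt with h | h
  · simp [gammaRate, ← h]
  · rw [gammaRate_of_pos h]
    simp [div_self h.ne']

lemma myIntegrableOn {a c : ℝ} (ha : 0 < a) (hc : 0 < c) :
    IntegrableOn (fun t : ℝ => t ^ (a - 1) * Real.exp (-(c * t))) (Ioi 0) := by
  have h0 : IntegrableOn (fun x : ℝ => Real.exp (-(c * x)) * (c * x) ^ (a - 1)) (Ioi 0) := by
    have := (integrableOn_Ioi_comp_mul_left_iff
      (fun x : ℝ => Real.exp (-x) * x ^ (a - 1)) 0 hc).mpr
    simpa using this (by simpa using Real.GammaIntegral_convergent ha)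
  have h1 : IntegrableOn
      (fun x : ℝ => c ^ (a - 1) * (x ^ (a - 1) * Real.exp (-(c * x)))) (Ioi 0) := by
    refine h0.congr_fun (fun x hx => ?_) measurableSet_Ioi
    dsimp only
    rw [Real.mul_rpow hc.le (le_of_lt hx)]
    ring
  have h2 : IntegrableOn
      (fun x : ℝ => (c ^ (a - 1))⁻¹ * (c ^ (a - 1) * (x ^ (a - 1) * Real.exp (-(c * x)))))
      (Ioi 0) := h1.const_mul _
  refine h2.congr_fun (fun x hx => ?_) measurableSet_Ioi
  dsimp only
  rw [← mul_assoc, inv_mul_cancel₀ (Real.rpow_pos_of_pos hc _).ne', one_mul]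

lemma gammaMeasure_Iic_zero {a r : ℝ} : gammaMeasure a r (Set.Iic 0) = 0 := by
  rw [gammaMeasure, withDensity_apply _ measurableSet_Iic,
    setLIntegral_congr (Iio_ae_eq_Iic (a := (0:ℝ))).symm]
  exact lintegral_gammaPDF_of_nonpos le_rfl

lemma gamma_lintegral_exp {a c : ℝ} (ha : 0 < a) (hc : 0 < c) :
    ∫⁻ x, ENNReal.ofReal (Real.exp ((1 - c) * x)) ∂(gammaMeasure a 1)
      = ENNReal.ofReal ((1 / c) ^ a) := by
  have hm : Measurable (gammaPDF a 1) := (measurable_gammaPDFReal a 1).ennreal_ofReal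
  have hg : Measurable (fun x : ℝ => ENNReal.ofReal (Real.exp ((1 - c) * x))) := by fun_prop
  rw [gammaMeasure, lintegral_withDensity_eq_lintegral_mul _ hm hg]
  simp only [Pi.mul_apply]
  rw [← lintegral_add_compl
    (fun x => gammaPDF a 1 x * ENNReal.ofReal (Real.exp ((1 - c) * x)))
    (measurableSet_Ici (a := (0:ℝ)))]
  have left0 : ∫⁻ x in (Ici (0:ℝ))ᶜ, gammaPDF a 1 x * ENNReal.ofReal (Real.exp ((1 - c) * x)) = 0 := by
    rw [compl_Ici]
    rw [setLIntegral_congr_fun measurableSet_Iio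
      (fun x (hx : x < 0) => by rw [gammaPDF_of_neg hx, zero_mul])]
    simp
  rw [left0, add_zero]
  rw [setLIntegral_congr (Ioi_ae_eq_Ici (a := (0:ℝ))).symm]
  have hGa : 0 < Real.Gamma a := Real.Gamma_pos_of_pos ha
  have hcongr : ∀ x ∈ Ioi (0:ℝ),
      gammaPDF a 1 x * ENNReal.ofReal (Real.exp ((1 - c) * x))
        = ENNReal.ofReal ((1 / Real.Gamma a) * (x ^ (a - 1) * Real.exp (-(c * x)))) := by
    intro x hx
    have hx0 : (0:ℝ) < x := hx
    rw [gammaPDF_of_nonneg (le_of_lt hx0), ← ENNReal.ofReal_mul (by positivity)]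
    congr 1
    rw [Real.one_rpow]
    rw [show 1 / Real.Gamma a * x ^ (a-1) * Real.exp (-(1 * x)) * Real.exp ((1 - c) * x)
      = 1 / Real.Gamma a * (x ^ (a-1) * (Real.exp (-(1 * x)) * Real.exp ((1 - c) * x))) from by
        ring]
    rw [← Real.exp_add, show -(1 * x) + (1 - c) * x = -(c * x) from by ring]
  rw [setLIntegral_congr_fun measurableSet_Ioi hcongr]
  rw [← ofReal_integral_eq_lintegral_ofReal ((myIntegrableOn ha hc).const_mul _)
    (ae_restrict_of_forall_mem measurableSet_Ioi
      (fun x hx => by have hx0 : (0:ℝ) < x := hx; positivity))]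
  rw [MeasureTheory.integral_const_mul, Real.integral_rpow_mul_exp_neg_mul_Ioi ha hc]
  congr 1
  field_simp

lemma gamma_chernoff {a c : ℝ} (ha : 0 < a) (hc : 0 < c) (u : ℝ)
    (S : Set ℝ) (hS : MeasurableSet S) (hSsub : ∀ t ∈ S, (1 - c) * u ≤ (1 - c) * t) :
    gammaMeasure a 1 S ≤ ENNReal.ofReal (Real.exp (-((1 - c) * u)) * (1 / c) ^ a) := by
  rw [← lintegral_indicator_one hS]
  have h2 : ∀ x, S.indicator (1 : ℝ → ℝ≥0∞) x
      ≤ ENNReal.ofReal (Real.exp (-((1 - c) * u)) * Real.exp ((1 - c) * x)) := by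
    intro x
    by_cases hx : x ∈ S
    · rw [Set.indicator_of_mem hx, Pi.one_apply, ← Real.exp_add,
        show (1 : ℝ≥0∞) = ENNReal.ofReal (Real.exp 0) by simp]
      exact ENNReal.ofReal_le_ofReal (Real.exp_le_exp.mpr (by have := hSsub x hx; linarith))
    · simp [hx]
  calc ∫⁻ x, S.indicator 1 x ∂(gammaMeasure a 1)
      ≤ ∫⁻ x, ENNReal.ofReal (Real.exp (-((1 - c) * u)) * Real.exp ((1 - c) * x))
          ∂(gammaMeasure a 1) := lintegral_mono h2
    _ = ENNReal.ofReal (Real.exp (-((1 - c) * u)))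
        * ∫⁻ x, ENNReal.ofReal (Real.exp ((1 - c) * x)) ∂(gammaMeasure a 1) := by
        simp_rw [ENNReal.ofReal_mul (Real.exp_nonneg _)]
        exact lintegral_const_mul _ (by fun_prop)
    _ = _ := by rw [gamma_lintegral_exp ha hc, ← ENNReal.ofReal_mul (Real.exp_nonneg _)]

end helpers

/-- **LDP upper bound for the Gamma distribution.** If `k_n > 0`, `k_n/n → k ≥ 0`
and `Z_n ∼ Gamma(k_n, 1)`, then for every closed `F ⊆ ℝ`,
`limsup (1/n)·log P(Z_n/n ∈ F) ≤ −inf_{x ∈ F} I(x)`. -/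
theorem stmt13 (k : ℝ) (hk : 0 ≤ k) (kseq : ℕ → ℝ) (hpos : ∀ n, 0 < kseq n)
    (hlim : Tendsto (fun n : ℕ => kseq n / n) atTop (nhds k))
    (F : Set ℝ) (hF : IsClosed F) :
    limsup (fun n : ℕ => (((n : ℝ)⁻¹ : ℝ) : EReal)
        * ENNReal.log (gammaMeasure (kseq n) 1 {t : ℝ | t / n ∈ F})) atTop
      ≤ -(((⨅ x ∈ F, gammaRate k x) : ℝ≥0∞) : EReal) := by
  set J : ℝ≥0∞ := ⨅ x ∈ F, gammaRate k x with hJdef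
  have htriv : ∀ n : ℕ, (((n:ℝ)⁻¹ : ℝ) : EReal)
      * ENNReal.log (gammaMeasure (kseq n) 1 {t : ℝ | t / n ∈ F}) ≤ 0 := by
    intro n
    have : IsProbabilityMeasure (gammaMeasure (kseq n) 1) :=
      isProbabilityMeasure_gammaMeasure (hpos n) one_pos
    have h1 : gammaMeasure (kseq n) 1 {t : ℝ | t / n ∈ F} ≤ 1 := prob_le_one
    have h2 : ENNReal.log (gammaMeasure (kseq n) 1 {t : ℝ | t / n ∈ F}) ≤ 0 := by
      simpa using ENNReal.log_monotone h1
    calc (((n:ℝ)⁻¹ : ℝ) : EReal) * ENNReal.log (gammaMeasure (kseq n) 1 {t : ℝ | t / n ∈ F})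
        ≤ (((n:ℝ)⁻¹ : ℝ) : EReal) * 0 :=
          mul_le_mul_of_nonneg_left h2 (EReal.coe_nonneg.mpr (by positivity))
      _ = 0 := mul_zero _
  rcases eq_or_ne J 0 with hJ0 | hJ0
  · rw [hJ0]
    simp only [EReal.coe_ennreal_zero, neg_zero]
    exact limsup_le_of_le (by isBoundedDefault) (Eventually.of_forall htriv)
  have hJpos : 0 < J := pos_iff_ne_zero.mpr hJ0
  refine le_of_forall_gt_imp_ge_of_dense fun y hy => ?_
  have hJneg : -(J : EReal) < 0 := by
    rw [EReal.neg_lt_comm, neg_zero]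
    exact EReal.coe_ennreal_pos.mpr hJpos
  obtain ⟨r, hr1, hr2⟩ := EReal.exists_between_coe_real (lt_min hy hJneg)
  have hrneg : r < 0 := by exact_mod_cast hr2.trans_le (min_le_right _ _)
  set s : ℝ := -r with hsdef
  have hspos : 0 < s := by simp [hsdef]; linarith
  have hsJ : ENNReal.ofReal s < J := by
    have h1 : ((s : ℝ) : EReal) < (J : EReal) := by
      rw [hsdef]
      push_cast
      rwa [← EReal.neg_lt_comm]
    rw [← EReal.coe_ennreal_lt_coe_ennreal_iff, EReal.coe_ennreal_ofReal,
      max_eq_left hspos.le]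
    exact h1
  have hrate : ∀ x ∈ F, ENNReal.ofReal s < gammaRate k x := fun x hx =>
    hsJ.trans_le (iInf₂_le x hx)
  have hoflt : ∀ v : ℝ, ENNReal.ofReal s < ENNReal.ofReal v → s < v := by
    intro v h
    by_contra hc
    push_neg at hc
    exact absurd (ENNReal.ofReal_le_ofReal hc) (not_le.mpr h)
  -- eventual existence of large b with big rate
  have hIk_ev : ∀ᶠ b in atTop, s < b - k + k * Real.log (k / b) ∧ k < b := by
    have hlog := Real.isLittleO_log_id_atTop.bound
      (c := 1 / (2 * (k + 1))) (by positivity)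
    filter_upwards [hlog,
      eventually_ge_atTop (max 1 (2 * (s + k + |k * Real.log k| + 1)))] with b hb hbge
    have hb1 : (1:ℝ) ≤ b := le_trans (le_max_left _ _) hbge
    have hb2 : 2 * (s + k + |k * Real.log k| + 1) ≤ b := le_trans (le_max_right _ _) hbge
    have hb0 : (0:ℝ) < b := lt_of_lt_of_le one_pos hb1
    have habsk : (0:ℝ) ≤ |k * Real.log k| := abs_nonneg _
    have hkb : k < b := by nlinarith
    refine ⟨?_, hkb⟩
    rcases hk.eq_or_lt with hk0 | hkpos
    · rw [← hk0]
      simp only [zero_mul, sub_zero, add_zero]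
      rw [← hk0] at hb2
      simp only [zero_mul, abs_zero] at hb2
      linarith
    · have habs : |Real.log b| ≤ 1 / (2 * (k + 1)) * b := by
        have := hb
        simp only [id_eq, Real.norm_eq_abs, abs_of_nonneg hb0.le] at this
        exact this
      have h4 : k * Real.log b ≤ b / 2 := by
        have h5 : k * |Real.log b| ≤ k * (1 / (2 * (k + 1)) * b) :=
          mul_le_mul_of_nonneg_left habs hkpos.le
        have h6 : k * Real.log b ≤ k * |Real.log b| :=
          mul_le_mul_of_nonneg_left (le_abs_self _) hkpos.le
        have h7 : k * (1 / (2 * (k + 1)) * b) ≤ b / 2 := by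
          rw [show k * (1 / (2 * (k + 1)) * b) = k * b / (2 * (k + 1)) from by ring,
            div_le_div_iff₀ (by positivity) two_pos]
          nlinarith
        linarith
      rw [Real.log_div hkpos.ne' hb0.ne', mul_sub]
      have h8 : -|k * Real.log k| ≤ k * Real.log k := neg_abs_le _
      linarith
  -- right cut point b
  obtain ⟨b, hb_gap, hb_I, hb_k⟩ : ∃ b : ℝ, (∀ x ∈ F, k ≤ x → b ≤ x)
      ∧ s < b - k + k * Real.log (k / b) ∧ k < b := by
    by_cases hT : (F ∩ Set.Ici k).Nonempty
    · have hcl : IsClosed (F ∩ Set.Ici k) := hF.inter isClosed_Ici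
      have hbdd : BddBelow (F ∩ Set.Ici k) := ⟨k, fun x hx => hx.2⟩
      set b₀ := sInf (F ∩ Set.Ici k) with hb₀def
      have hmem := hcl.csInf_mem hT hbdd
      have hb₀F : b₀ ∈ F := hmem.1
      have hb₀k : k ≤ b₀ := hmem.2
      have hrate₀ := hrate b₀ hb₀F
      have hb₀gt : k < b₀ := by
        rcases hb₀k.eq_or_lt with h | h
        · exfalso
          rw [← h, gammaRate_self hk] at hrate₀
          simp at hrate₀
        · exact h
      have hb₀pos : 0 < b₀ := lt_of_le_of_lt hk hb₀gt
      rw [gammaRate_of_pos hb₀pos] at hrate₀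
      exact ⟨b₀, fun x hx hkx => csInf_le hbdd ⟨hx, hkx⟩, hoflt _ hrate₀, hb₀gt⟩
    · obtain ⟨b, hb⟩ := hIk_ev.exists
      exact ⟨b, fun x hx hkx => absurd ⟨x, hx, hkx⟩ hT, hb.1, hb.2⟩
  have hb_pos : 0 < b := lt_of_le_of_lt hk hb_k
  -- left cut point a
  obtain ⟨aℓ, ha_lt, ha_gap, ha_alt⟩ : ∃ a : ℝ, a < k ∧ (∀ x ∈ F, x ≤ k → x ≤ a)
      ∧ (a ≤ 0 ∨ (0 < a ∧ s < a - k + k * Real.log (k / a))) := by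
    by_cases hS : (F ∩ Set.Iic k).Nonempty
    · have hcl : IsClosed (F ∩ Set.Iic k) := hF.inter isClosed_Iic
      have hbdd : BddAbove (F ∩ Set.Iic k) := ⟨k, fun x hx => hx.2⟩
      set a₀ := sSup (F ∩ Set.Iic k) with ha₀def
      have hmem := hcl.csSup_mem hS hbdd
      have ha₀F : a₀ ∈ F := hmem.1
      have ha₀k : a₀ ≤ k := hmem.2
      have hrate₀ := hrate a₀ ha₀F
      have hgap : ∀ x ∈ F, x ≤ k → x ≤ a₀ := fun x hx hkx => le_csSup hbdd ⟨hx, hkx⟩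
      rcases lt_trichotomy a₀ 0 with h | h | h
      · exact ⟨a₀, lt_of_lt_of_le h hk, hgap, Or.inl h.le⟩
      · have hk0 : k ≠ 0 := by
          intro hkk
          rw [h, ← hkk, gammaRate_self hk] at hrate₀
          simp at hrate₀
        exact ⟨a₀, h ▸ lt_of_le_of_ne hk (Ne.symm hk0), hgap, Or.inl h.le⟩
      · have ha₀lt : a₀ < k := by
          rcases ha₀k.eq_or_lt with h2 | h2
          · exfalso
            rw [h2, gammaRate_self hk] at hrate₀
            simp at hrate₀
          · exact h2
        rw [gammaRate_of_pos h] at hrate₀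
        exact ⟨a₀, ha₀lt, hgap, Or.inr ⟨h, hoflt _ hrate₀⟩⟩
    · exact ⟨-1, by linarith, fun x hx hkx => absurd ⟨x, hx, hkx⟩ hS, Or.inl (by norm_num)⟩
  -- Chernoff parameter for the right tail
  obtain ⟨c₁, hc₁0, hc₁1, he₁⟩ : ∃ c₁ : ℝ, 0 < c₁ ∧ c₁ < 1 ∧
      -(1 - c₁) * b + k * Real.log (1 / c₁) < -s := by
    rcases hk.eq_or_lt with hk0 | hkpos
    · have hbs : s < b := by
        have := hb_I
        rw [← hk0] at this
        simpa using this
      refine ⟨1 - (s + b) / (2 * b), ?_, ?_, ?_⟩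
      · rw [sub_pos, div_lt_one (by positivity)]
        linarith
      · have : (0:ℝ) < (s + b) / (2 * b) := by positivity
        linarith
      · rw [← hk0]
        simp only [zero_mul, add_zero]
        have he : (1 - (1 - (s + b) / (2 * b))) * b = (s + b) / 2 := by
          field_simp
          ring
        rw [neg_mul, he]
        linarith
    · refine ⟨k / b, by positivity, by rwa [div_lt_one hb_pos], ?_⟩
      have he : -(1 - k / b) * b + k * Real.log (1 / (k / b))
          = -(b - k + k * Real.log (k / b)) := by
        rw [one_div, Real.log_inv]
        field_simp
        ring
      rw [he]
      linarith
  -- limit of RHS comparison sequence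
  have hrhs_lim : Tendsto (fun n : ℕ => r - Real.log 2 / n) atTop (nhds r) := by
    have h0 : Tendsto (fun n : ℕ => Real.log 2 / n) atTop (nhds 0) :=
      Tendsto.div_atTop tendsto_const_nhds tendsto_natCast_atTop_atTop
    simpa using tendsto_const_nhds.sub h0
  -- right tail eventual bound
  have hright : ∀ᶠ n : ℕ in atTop, gammaMeasure (kseq n) 1 (Set.Ici ((n:ℝ) * b))
      ≤ ENNReal.ofReal (1 / 2 * Real.exp (n * r)) := by
    have hulim : Tendsto (fun n : ℕ => -(1 - c₁) * b + (kseq n / n) * Real.log (1 / c₁))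
        atTop (nhds (-(1 - c₁) * b + k * Real.log (1 / c₁))) :=
      tendsto_const_nhds.add (hlim.mul_const _)
    have hev := hulim.eventually_lt hrhs_lim (by rw [hsdef] at he₁; linarith)
    filter_upwards [hev, eventually_ge_atTop 1] with n hn hn1
    have hn0 : (0:ℝ) < n := by exact_mod_cast hn1
    have hcher := gamma_chernoff (hpos n) hc₁0 ((n:ℝ) * b) (Set.Ici ((n:ℝ) * b))
      measurableSet_Ici (fun t ht =>
        mul_le_mul_of_nonneg_left ht (by linarith : (0:ℝ) ≤ 1 - c₁))
    refine hcher.trans (ENNReal.ofReal_le_ofReal ?_)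
    rw [Real.rpow_def_of_pos (by positivity : (0:ℝ) < 1 / c₁), ← Real.exp_add]
    have hhalf : (1:ℝ) / 2 * Real.exp (n * r) = Real.exp (n * r - Real.log 2) := by
      rw [Real.exp_sub, Real.exp_log two_pos]
      ring
    rw [hhalf]
    apply Real.exp_le_exp.mpr
    have h2 : (n:ℝ) * (-(1 - c₁) * b + (kseq n / n) * Real.log (1 / c₁))
        ≤ (n:ℝ) * (r - Real.log 2 / n) := mul_le_mul_of_nonneg_left hn.le hn0.le
    have e1 : (n:ℝ) * (-(1 - c₁) * b + (kseq n / n) * Real.log (1 / c₁))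
        = -((1 - c₁) * ((n:ℝ) * b)) + Real.log (1 / c₁) * kseq n := by
      field_simp
    have e2 : (n:ℝ) * (r - Real.log 2 / n) = (n:ℝ) * r - Real.log 2 := by
      field_simp [mul_comm]
    rw [e1, e2] at h2
    exact h2
  -- left tail eventual bound
  have hleft : ∀ᶠ n : ℕ in atTop, gammaMeasure (kseq n) 1 (Set.Iic ((n:ℝ) * aℓ))
      ≤ ENNReal.ofReal (1 / 2 * Real.exp (n * r)) := by
    rcases ha_alt with hneg | ⟨hapos, haI⟩
    · filter_upwards [eventually_ge_atTop 1] with n hn1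
      have hn0 : (0:ℝ) ≤ n := by positivity
      have hna : (n:ℝ) * aℓ ≤ 0 := mul_nonpos_of_nonneg_of_nonpos hn0 hneg
      have h0 : gammaMeasure (kseq n) 1 (Set.Iic ((n:ℝ) * aℓ))
          ≤ gammaMeasure (kseq n) 1 (Set.Iic 0) :=
        measure_mono (Set.Iic_subset_Iic.mpr hna)
      rw [gammaMeasure_Iic_zero] at h0
      exact le_trans h0 zero_le
    · have hkpos : 0 < k := lt_trans hapos ha_lt
      set c₂ : ℝ := k / aℓ with hc₂def
      have hc₂1 : 1 < c₂ := (one_lt_div hapos).mpr ha_lt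
      have hc₂0 : 0 < c₂ := lt_trans one_pos hc₂1
      have he₂ : (c₂ - 1) * aℓ + k * Real.log (1 / c₂) < -s := by
        have he : (c₂ - 1) * aℓ + k * Real.log (1 / c₂)
            = -(aℓ - k + k * Real.log (k / aℓ)) := by
          rw [hc₂def, one_div, Real.log_inv]
          field_simp
          ring
        rw [he]
        linarith
      have hulim : Tendsto (fun n : ℕ => (c₂ - 1) * aℓ + (kseq n / n) * Real.log (1 / c₂))
          atTop (nhds ((c₂ - 1) * aℓ + k * Real.log (1 / c₂))) :=
        tendsto_const_nhds.add (hlim.mul_const _)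
      have hev := hulim.eventually_lt hrhs_lim (by rw [hsdef] at he₂; linarith)
      filter_upwards [hev, eventually_ge_atTop 1] with n hn hn1
      have hn0 : (0:ℝ) < n := by exact_mod_cast hn1
      have hcher := gamma_chernoff (hpos n) hc₂0 ((n:ℝ) * aℓ) (Set.Iic ((n:ℝ) * aℓ))
        measurableSet_Iic (fun t ht =>
          mul_le_mul_of_nonpos_left ht (by linarith : (1:ℝ) - c₂ ≤ 0))
      refine hcher.trans (ENNReal.ofReal_le_ofReal ?_)
      rw [Real.rpow_def_of_pos (by positivity : (0:ℝ) < 1 / c₂), ← Real.exp_add]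
      have hhalf : (1:ℝ) / 2 * Real.exp (n * r) = Real.exp (n * r - Real.log 2) := by
        rw [Real.exp_sub, Real.exp_log two_pos]
        ring
      rw [hhalf]
      apply Real.exp_le_exp.mpr
      have h2 : (n:ℝ) * ((c₂ - 1) * aℓ + (kseq n / n) * Real.log (1 / c₂))
          ≤ (n:ℝ) * (r - Real.log 2 / n) := mul_le_mul_of_nonneg_left hn.le hn0.le
      have e1 : (n:ℝ) * ((c₂ - 1) * aℓ + (kseq n / n) * Real.log (1 / c₂))
          = -((1 - c₂) * ((n:ℝ) * aℓ)) + Real.log (1 / c₂) * kseq n := by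
        field_simp
        ring
      have e2 : (n:ℝ) * (r - Real.log 2 / n) = (n:ℝ) * r - Real.log 2 := by
        field_simp [mul_comm]
      rw [e1, e2] at h2
      exact h2
  -- main eventual bound
  have hmain : ∀ᶠ n : ℕ in atTop, (((n:ℝ)⁻¹ : ℝ) : EReal)
      * ENNReal.log (gammaMeasure (kseq n) 1 {t : ℝ | t / n ∈ F}) ≤ (r : EReal) := by
    filter_upwards [hleft, hright, eventually_ge_atTop 1] with n hL hR hn1
    have hn0 : (0:ℝ) < n := by exact_mod_cast hn1
    have hsub : {t : ℝ | t / n ∈ F} ⊆ Set.Iic ((n:ℝ) * aℓ) ∪ Set.Ici ((n:ℝ) * b) := by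
      intro t ht
      rcases le_or_gt (t / n) k with h | h
      · left
        have h2 : t / n ≤ aℓ := ha_gap _ ht h
        have := (div_le_iff₀ hn0).mp h2
        simpa [mul_comm] using this
      · right
        have h2 : b ≤ t / n := hb_gap _ ht h.le
        have := (le_div_iff₀ hn0).mp h2
        simpa [mul_comm] using this
    have hmeas : gammaMeasure (kseq n) 1 {t : ℝ | t / n ∈ F}
        ≤ ENNReal.ofReal (Real.exp (n * r)) := by
      calc gammaMeasure (kseq n) 1 {t : ℝ | t / n ∈ F}
          ≤ gammaMeasure (kseq n) 1 (Set.Iic ((n:ℝ) * aℓ) ∪ Set.Ici ((n:ℝ) * b)) :=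
            measure_mono hsub
        _ ≤ gammaMeasure (kseq n) 1 (Set.Iic ((n:ℝ) * aℓ))
            + gammaMeasure (kseq n) 1 (Set.Ici ((n:ℝ) * b)) := measure_union_le _ _
        _ ≤ ENNReal.ofReal (1 / 2 * Real.exp (n * r))
            + ENNReal.ofReal (1 / 2 * Real.exp (n * r)) := add_le_add hL hR
        _ = ENNReal.ofReal (Real.exp (n * r)) := by
            rw [← ENNReal.ofReal_add (by positivity) (by positivity)]
            ring_nf
    have hlog : ENNReal.log (gammaMeasure (kseq n) 1 {t : ℝ | t / n ∈ F})
        ≤ (((n:ℝ) * r : ℝ) : EReal) := by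
      have h3 := ENNReal.log_monotone hmeas
      rwa [ENNReal.log_ofReal, if_neg (not_le.mpr (Real.exp_pos _)), Real.log_exp] at h3
    calc (((n:ℝ)⁻¹ : ℝ) : EReal)
        * ENNReal.log (gammaMeasure (kseq n) 1 {t : ℝ | t / n ∈ F})
        ≤ (((n:ℝ)⁻¹ : ℝ) : EReal) * (((n:ℝ) * r : ℝ) : EReal) :=
          mul_le_mul_of_nonneg_left hlog (EReal.coe_nonneg.mpr (by positivity))
      _ = (r : EReal) := by
          rw [← EReal.coe_mul]
          congr 1
          field_simp
    -- done
  have hlimsup := limsup_le_of_le (by isBoundedDefault) hmain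
  exact hlimsup.trans ((le_of_lt hr2).trans (min_le_left _ _))
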